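/- Let 𝓜 = (M,<,…) be an o-minimal structure having a generating system {C₁,…,C_m} of minimally self-sufficient sets. Then |𝔇(𝓜)| = 2^m − 1, where 𝔇(𝓜) is the set of equivalence classes of self-sufficient definable subsets of M under the relation of having finite symmetric difference. -/

import Mathlib

open FirstOrder FirstOrder.Language Set

universe u v w

namespace PaperDim

section Core

variable (L : FirstOrder.Language.{v, w}) (M : Type u) [L.Structure M]

/-- The collection of definable subsets of `M^n` (definable with parameters from `M`). -/
abbrev DefSet (n : ℕ) : Type u :=
  {X : Set (Fin n → M) // Set.Definable (Set.univ : Set M) L X}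

variable {L M}

/-- A definable subset of `M^1` viewed as a subset of `M`. -/
def asSet1 (X : Set (Fin 1 → M)) : Set M := {a : M | (fun _ => a) ∈ X}

/-- The fiber of `X ⊆ M^{n+1}` over `x ∈ M^n`, as a subset of `M^1`. -/
def fiber {n : ℕ} (X : Set (Fin (n + 1) → M)) (x : Fin n → M) : Set (Fin 1 → M) :=
  {y | Fin.snoc x (y 0) ∈ X}

/-- Condition (1) of a dimension function: `dim ∅ = -∞`, `dim {a} = 0`, `dim M = 1`.
Here `d k` is the value of the dimension function on definable subsets of `M^{k+1}`. -/
def Cond1 (d : ∀ n : ℕ, DefSet L M (n + 1) → WithBot ℕ) : Prop :=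
  (∀ X : DefSet L M 1, X.1 = ∅ → d 0 X = ⊥) ∧
  (∀ (X : DefSet L M 1) (a : M), X.1 = ({fun _ => a} : Set (Fin 1 → M)) → d 0 X = 0) ∧
  (∀ X : DefSet L M 1, X.1 = (Set.univ : Set (Fin 1 → M)) → d 0 X = 1)

/-- Condition (2)ₙ (at arity `n + 1`): `dim (X ∪ Y) = max (dim X) (dim Y)`. -/
def Cond2 (d : ∀ n : ℕ, DefSet L M (n + 1) → WithBot ℕ) (n : ℕ) : Prop :=
  ∀ X Y Z : DefSet L M (n + 1), Z.1 = X.1 ∪ Y.1 → d n Z = max (d n X) (d n Y)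

/-- Condition (3)ₙ (at arity `n + 1`): invariance under coordinate permutations. -/
def Cond3 (d : ∀ n : ℕ, DefSet L M (n + 1) → WithBot ℕ) (n : ℕ) : Prop :=
  ∀ (σ : Equiv.Perm (Fin (n + 1))) (X Y : DefSet L M (n + 1)),
    Y.1 = {y : Fin (n + 1) → M | y ∘ σ ∈ X.1} → d n Y = d n X

/-- Condition (3'): invariance under switching the two coordinates, at arity 2. -/
def Cond3' (d : ∀ n : ℕ, DefSet L M (n + 1) → WithBot ℕ) : Prop :=
  ∀ X Y : DefSet L M 2, Y.1 = {v : Fin 2 → M | ![v 1, v 0] ∈ X.1} → d 1 Y = d 1 X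

/-- Condition (4)ₙ, the addition property (at arity `n + 2`):
the set `X(i)` of points over which the fiber of `X` has dimension `i` is definable, and
`dim (X ∩ Π⁻¹(X(i))) = dim X(i) + i`. -/
def Cond4 (d : ∀ n : ℕ, DefSet L M (n + 1) → WithBot ℕ) (n : ℕ) : Prop :=
  ∀ (X : DefSet L M (n + 2)) (i : Fin 2),
    ∃ (Xi : DefSet L M (n + 1)) (W : DefSet L M (n + 2)),
      Xi.1 = {x : Fin (n + 1) → M |
        ∃ hf : Set.Definable (Set.univ : Set M) L (fiber X.1 x),
          d 0 ⟨fiber X.1 x, hf⟩ = ((i : ℕ) : WithBot ℕ)} ∧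
      W.1 = X.1 ∩ (fun z : Fin (n + 2) → M => z ∘ Fin.castSucc) ⁻¹' Xi.1 ∧
      d (n + 1) W = d n Xi + ((i : ℕ) : WithBot ℕ)

/-- A dimension function on the structure `M` (van den Dries). -/
def IsDimFun (d : ∀ n : ℕ, DefSet L M (n + 1) → WithBot ℕ) : Prop :=
  Cond1 d ∧ (∀ n, Cond2 d n) ∧ (∀ n, Cond3 d n) ∧ (∀ n, Cond4 d n)

/-- A weak dimension function: conditions (1), (2)₁, (3') and (4)ₙ for all `n > 1`. -/
def IsWeakDimFun (d : ∀ n : ℕ, DefSet L M (n + 1) → WithBot ℕ) : Prop :=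
  Cond1 d ∧ Cond2 d 0 ∧ Cond3' d ∧ (∀ n, Cond4 d n)

variable (L M)

/-- The set `DIM(M)` of dimension functions on `M`. -/
def DimFuns : Set (∀ n : ℕ, DefSet L M (n + 1) → WithBot ℕ) := {d | IsDimFun d}

/-- `𝔫_dim(M)`: the cardinality of the set of dimension functions on `M`. -/
noncomputable def nDim : Cardinal := Cardinal.mk (DimFuns L M)

/-- The order `<` is definable in the structure. -/
def LtDefinable [LT M] : Prop :=
  Set.Definable (Set.univ : Set M) L {v : Fin 2 → M | v 0 < v 1}

/-- The graph of addition is definable in the structure. -/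
def AddDefinable [Add M] : Prop :=
  Set.Definable (Set.univ : Set M) L {v : Fin 3 → M | v 0 + v 1 = v 2}

/-- The graph of multiplication is definable in the structure. -/
def MulDefinable [Mul M] : Prop :=
  Set.Definable (Set.univ : Set M) L {v : Fin 3 → M | v 0 * v 1 = v 2}

end Core

/-- The order topology on a linear order, generated by open rays. -/
def orderTop (α : Type*) [LinearOrder α] : TopologicalSpace α :=
  TopologicalSpace.generateFrom {s : Set α | (∃ a, s = Set.Ioi a) ∨ (∃ a, s = Set.Iio a)}

/-- A set is discrete (w.r.t. a topology `t`) if all of its points are isolated in it. -/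
def DiscreteIn {α : Type*} (t : TopologicalSpace α) (D : Set α) : Prop :=
  ∀ x ∈ D, ∃ U : Set α, t.IsOpen U ∧ U ∩ D = {x}

/-- An open interval: a nonempty set of the form `(a, b)` with `a, b ∈ M ∪ {±∞}`. -/
def IsOpenInterval {α : Type*} [Preorder α] (S : Set α) : Prop :=
  S.Nonempty ∧ ((∃ a b, S = Set.Ioo a b) ∨ (∃ a, S = Set.Ioi a) ∨
    (∃ b, S = Set.Iio b) ∨ S = Set.univ)

section Ord

variable (L : FirstOrder.Language.{v, w}) (M : Type u) [L.Structure M]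

/-- O-minimality: every definable subset of `M` is a union of a finite set and finitely many
open intervals. -/
def OMinimal [LinearOrder M] : Prop :=
  ∀ X : DefSet L M 1, ∃ (F : Set M) (k : ℕ) (C : Fin k → Set M),
    F.Finite ∧ (∀ i, IsOpenInterval (C i)) ∧ asSet1 X.1 = F ∪ ⋃ i, C i

/-- Weak o-minimality: every definable subset of `M` is a union of finitely many convex sets. -/
def WeaklyOMinimal [LinearOrder M] : Prop :=
  ∀ X : DefSet L M 1, ∃ (k : ℕ) (C : Fin k → Set M),
    (∀ i, (C i).OrdConnected) ∧ asSet1 X.1 = ⋃ i, C i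

/-- Definable completeness: every definable subset of `M` has a supremum and an infimum in
`M ∪ {±∞}`. -/
def DefinablyComplete [LinearOrder M] : Prop :=
  ∀ X : DefSet L M 1,
    ((asSet1 X.1).Nonempty → BddAbove (asSet1 X.1) → ∃ a, IsLUB (asSet1 X.1) a) ∧
    ((asSet1 X.1).Nonempty → BddBelow (asSet1 X.1) → ∃ a, IsGLB (asSet1 X.1) a)

/-- d-minimality: the structure is definably complete and in every elementarily equivalent
structure, every definable subset of the universe is a union of an open set and finitely many
discrete sets. The linear order is assumed to be the interpretation of the relation symbol `lt`. -/
def DMinimal [LinearOrder M] (lt : L.Relations 2) : Prop :=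
  DefinablyComplete L M ∧
  ∀ (N : Type u) [L.Structure N] [LinearOrder N],
    (∀ a b : N, Structure.RelMap lt ![a, b] ↔ a < b) →
    L.ElementarilyEquivalent M N →
    ∀ X : DefSet L N 1,
      ∃ (U : Set N) (k : ℕ) (D : Fin k → Set N),
        (orderTop N).IsOpen U ∧ (∀ i, DiscreteIn (orderTop N) (D i)) ∧
        asSet1 X.1 = U ∪ ⋃ i, D i

end Ord

open scoped Classical in
/-- The topological dimension of a definable set: the largest `d` such that the image of the
set under some coordinate projection `M^n → M^d` has nonempty interior (w.r.t. the order
topology and the corresponding product topologies). -/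
noncomputable def dimTop {M : Type u} [LinearOrder M] {n : ℕ} (X : Set (Fin n → M)) :
    WithBot ℕ :=
  if X = ∅ then ⊥
  else
    ↑(sSup {d : ℕ | ∃ f : Fin d → Fin n, Function.Injective f ∧
      (@interior (Fin d → M) (@Pi.topologicalSpace (Fin d) (fun _ => M) (fun _ => orderTop M))
        ((fun x : Fin n → M => x ∘ f) '' X)).Nonempty})


/-! ### Extra notions -/

/-- `G ⊆ M²` is the graph of a bijection from `A` onto `B`. -/
def IsDefBijectionGraph {M : Type u} (G : Set (Fin 2 → M)) (A B : Set M) : Prop :=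
  (∀ v ∈ G, v 0 ∈ A ∧ v 1 ∈ B) ∧
  (∀ x ∈ A, ∃! y : M, (![x, y] : Fin 2 → M) ∈ G) ∧
  (∀ y ∈ B, ∃! x : M, (![x, y] : Fin 2 → M) ∈ G)

section Extra

variable (L : FirstOrder.Language.{v, w}) (M : Type u) [L.Structure M]

/-- A definable set `I ⊆ M` is self-sufficient if it is infinite and there is no definable
bijection between an infinite definable subset of `I` and an infinite definable subset of
`M ∖ I`. -/
def SelfSufficient (I : Set M) : Prop :=
  I.Infinite ∧
  ∀ J₁ J₂ : DefSet L M 1, asSet1 J₁.1 ⊆ I → asSet1 J₂.1 ⊆ Iᶜ →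
    (asSet1 J₁.1).Infinite → (asSet1 J₂.1).Infinite →
    ¬ ∃ G : DefSet L M 2, IsDefBijectionGraph G.1 (asSet1 J₁.1) (asSet1 J₂.1)

/-- A self-sufficient set is minimally self-sufficient if every self-sufficient set either
meets it in a finite set or contains it up to a finite set. -/
def MinimallySelfSufficient (I : Set M) : Prop :=
  SelfSufficient L M I ∧
  ∀ X : DefSet L M 1, SelfSufficient L M (asSet1 X.1) →
    (I ∩ asSet1 X.1).Finite ∨ ∃ F : Set M, F.Finite ∧ I ⊆ asSet1 X.1 ∪ F

end Extra

/-- `I₁ ∼_fin I₂`: the symmetric difference is finite. -/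
def FinSymmDiff {M : Type u} (A B : Set M) : Prop := ((A \ B) ∪ (B \ A)).Finite

/-- `I⟨τ⟩`: the product of copies of `I` (where `τ i = false`) and `M ∖ I`
(where `τ i = true`). -/
def Itau {M : Type u} (I : Set M) {n : ℕ} (τ : Fin n → Bool) : Set (Fin n → M) :=
  {v | ∀ i, if τ i then v i ∉ I else v i ∈ I}

open scoped Classical in
/-- The value of `Dim[I]` on a (nonempty) definable set contained in `I⟨τ⟩`. -/
noncomputable def DimIPiece {M : Type u} [LinearOrder M] (I : Set M) :
    (n : ℕ) → (Fin (n + 1) → Bool) → Set (Fin (n + 1) → M) → WithBot ℕ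
  | 0, τ, X =>
    if X = ∅ then ⊥ else if τ 0 then 0 else dimTop X
  | n + 1, τ, X =>
    if X = ∅ then ⊥
    else if τ (Fin.last (n + 1)) then
      DimIPiece I n (fun i => τ i.castSucc)
        ((fun v : Fin (n + 2) → M => v ∘ Fin.castSucc) '' X)
    else
      max (dimTop {x : Fin (n + 1) → M |
              (∃ v ∈ X, v ∘ Fin.castSucc = x) ∧ dimTop (fiber X x) ≠ 1})
        (dimTop {x : Fin (n + 1) → M | dimTop (fiber X x) = 1} + 1)

/-- The function `Dim[I]` associated with a subset `I` of `M` (the input dimension being the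
topological dimension). -/
noncomputable def DimI {M : Type u} [LinearOrder M] (I : Set M) (n : ℕ)
    (X : Set (Fin (n + 1) → M)) : WithBot ℕ :=
  Finset.univ.sup fun τ : Fin (n + 1) → Bool => DimIPiece I n τ (X ∩ Itau I τ)

section Morley

variable (L : FirstOrder.Language.{v, w}) (M : Type u) [L.Structure M]

/-- The model-theoretic algebraic closure of a set of parameters `A`. -/
def aclS (A : Set M) : Set M :=
  {a : M | ∃ s : Set (Fin 1 → M), Set.Definable A L s ∧ s.Finite ∧ (fun _ => a) ∈ s}

open scoped Classical in
/-- The rank `rk^acl(X/A)`: the largest cardinality of a subset of the coordinates of a point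
of `X` that is `acl`-independent over `A` (and `-∞` for `X = ∅`). -/
noncomputable def rkOver {n : ℕ} (A : Set M) (X : Set (Fin n → M)) : WithBot ℕ :=
  if X = ∅ then ⊥
  else
    ↑(sSup {k : ℕ | ∃ x ∈ X, ∃ S : Finset (Fin n), S.card = k ∧
        ∀ i ∈ S, x i ∉ aclS L M (A ∪ x '' {j : Fin n | j ∈ S ∧ j ≠ i})})

/-- A structure is minimal if every definable subset of the universe is finite or cofinite. -/
def MinimalStr : Prop :=
  ∀ X : DefSet L M 1, (asSet1 X.1).Finite ∨ ((asSet1 X.1)ᶜ : Set M).Finite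

/-- A structure is strongly minimal if every elementarily equivalent structure is minimal. -/
def StronglyMinimal : Prop :=
  MinimalStr L M ∧
  ∀ (N : Type u) [L.Structure N], L.ElementarilyEquivalent M N → MinimalStr L N

end Morley

section Theories

/-- A divisible Abelian group structure on a subset `S`, with addition `f`. -/
def DivAbGroupOn {α : Type*} (f : α → α → α) (S : Set α) : Prop :=
  (∀ x ∈ S, ∀ y ∈ S, f x y ∈ S) ∧
  (∀ x ∈ S, ∀ y ∈ S, f x y = f y x) ∧
  (∀ x ∈ S, ∀ y ∈ S, ∀ z ∈ S, f (f x y) z = f x (f y z)) ∧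
  (∃ e ∈ S, (∀ x ∈ S, f e x = x) ∧ (∀ x ∈ S, ∃ y ∈ S, f x y = e)) ∧
  (∀ k : ℕ, 0 < k → ∀ x ∈ S, ∃ y ∈ S, (f y)^[k - 1] y = x)

/-- Embedding of `M` into `M ∪ {±∞}`. -/
def emb {α : Type*} (x : α) : WithBot (WithTop α) := ((x : WithTop α) : WithBot (WithTop α))

/-- `M` is a model of the theory `T_m` of Proposition 3.17: a DLO with constants
`c_1 < ⋯ < c_{m-1}` (recorded here by the boundary sequence
`⊥ = c 0 < c 1 < ⋯ < c m = ⊤` in `M ∪ {±∞}`), such that `+` restricts to a divisible Abelian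
group on each interval `(c_{i-1}, c_i)` and is constantly `c_1` off the union of the
`(c_{i-1}, c_i)²`. -/
def ModelTm (m : ℕ) (hm : 0 < m) (L : FirstOrder.Language.{v, w}) (M : Type u)
    [L.Structure M] [LinearOrder M]
    (lt : L.Relations 2) (plus : L.Functions 2)
    (c : Fin (m + 1) → WithBot (WithTop M)) : Prop :=
  DenselyOrdered M ∧ NoMinOrder M ∧ NoMaxOrder M ∧ Nonempty M ∧
  (∀ x y : M, Structure.RelMap lt ![x, y] ↔ x < y) ∧
  c 0 = ⊥ ∧ c (Fin.last m) = ⊤ ∧ StrictMono c ∧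
  (∀ i : Fin (m + 1), i ≠ 0 → i ≠ Fin.last m → ∃ x : M, c i = emb x) ∧
  (∀ i : Fin m,
    DivAbGroupOn (fun x y : M => Structure.funMap plus ![x, y])
      {x : M | c i.castSucc < emb x ∧ emb x < c i.succ}) ∧
  (∀ x y : M,
    (¬ ∃ i : Fin m, (c i.castSucc < emb x ∧ emb x < c i.succ) ∧
        (c i.castSucc < emb y ∧ emb y < c i.succ)) →
    ∀ z : M, c ⟨1, by omega⟩ = emb z → Structure.funMap plus ![x, y] = z)

/-- The set of realizations of a unary predicate. -/
def relSet (L : FirstOrder.Language.{v, w}) (M : Type u) [L.Structure M]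
    (r : L.Relations 1) : Set M :=
  {x : M | Structure.RelMap r ![x]}

/-- `M` is a model of the theory `T_m` of Theorem 3.18: an ordered divisible Abelian group
with a strictly increasing chain of nontrivial proper convex subgroups `U_1 ⊊ ⋯ ⊊ U_m ⊊ M`. -/
def ModelTw (m : ℕ) (L : FirstOrder.Language.{v, w}) (M : Type u)
    [L.Structure M] [AddCommGroup M] [LinearOrder M] [IsOrderedAddMonoid M]
    (lt : L.Relations 2) (plus : L.Functions 2) (U : Fin m → L.Relations 1) : Prop :=
  (∀ x y : M, Structure.RelMap lt ![x, y] ↔ x < y) ∧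
  (∀ x y : M, Structure.funMap plus ![x, y] = x + y) ∧
  (∀ k : ℕ, 0 < k → ∀ x : M, ∃ y : M, k • y = x) ∧
  (∀ i : Fin m,
    (0 : M) ∈ relSet L M (U i) ∧
    (∀ x ∈ relSet L M (U i), ∀ y ∈ relSet L M (U i), x + y ∈ relSet L M (U i)) ∧
    (∀ x ∈ relSet L M (U i), -x ∈ relSet L M (U i)) ∧
    (relSet L M (U i)).OrdConnected ∧
    relSet L M (U i) ≠ {0} ∧ relSet L M (U i) ≠ Set.univ) ∧
  (∀ i j : Fin m, i < j → relSet L M (U i) ⊂ relSet L M (U j))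

end Theories

/-!
A union of finitely many self-sufficient sets is self-sufficient: a definable bijection from an
infinite subset of the union to its complement restricts, on the infinite part lying in one of
the sets, to a definable bijection violating that set's self-sufficiency. So every nonempty
union `⋃ i ∈ S, Cᵢ` is self-sufficient, and these `2 ^ m - 1` unions are pairwise
`∼_fin`-inequivalent because the `Cᵢ` are infinite and almost disjoint. Conversely, by minimality
a self-sufficient `I` meets each `Cᵢ` either finitely or almost entirely, so `I` agrees up to a
finite set with the union of the `Cᵢ` it meets infinitely, and there is at least one such `Cᵢ`
since `I` is infinite and the `Cᵢ` cover `M` up to a finite set.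
-/

section AlmostDisjoint

open scoped symmDiff

variable {M ι : Type*}

lemma infinite_sdiff_biUnion_of_notMem {C : ι → Set M}
    (hdisj : ∀ i j, i ≠ j → (C i ∩ C j).Finite) {i : ι} (hi : (C i).Infinite)
    {T : Finset ι} (hiT : i ∉ T) : (C i \ ⋃ j ∈ T, C j).Infinite := by
  have hfin : (C i ∩ ⋃ j ∈ T, C j).Finite := by
    rw [inter_iUnion₂]
    exact T.finite_toSet.biUnion fun j hj => hdisj i j fun h => hiT (h ▸ hj)
  simpa only [sdiff_self_inter] using hi.sdiff hfin

lemma not_finite_symmDiff_biUnion {C : ι → Set M} (hinf : ∀ i, (C i).Infinite)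
    (hdisj : ∀ i j, i ≠ j → (C i ∩ C j).Finite) {S T : Finset ι} (hST : S ≠ T) :
    ¬ ((⋃ i ∈ S, C i) ∆ (⋃ i ∈ T, C i)).Finite := by
  suffices key : ∀ {S T : Finset ι} {i : ι}, i ∈ S → i ∉ T →
      ¬ ((⋃ i ∈ S, C i) ∆ (⋃ i ∈ T, C i)).Finite by
    obtain ⟨i, hi⟩ : ∃ i, ¬ (i ∈ S ↔ i ∈ T) := not_forall.1 (mt Finset.ext hST)
    by_cases hiS : i ∈ S
    · exact key hiS (by tauto)
    · rw [symmDiff_comm]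
      exact key (by tauto) hiS
  intro S T i hiS hiT hfin
  refine infinite_sdiff_biUnion_of_notMem hdisj (hinf i) hiT (hfin.subset ?_)
  exact (sdiff_subset_sdiff_left (subset_biUnion_of_mem (u := C) hiS)).trans subset_union_left

lemma exists_nonempty_finite_symmDiff_biUnion [Finite ι] {C : ι → Set M}
    (hcov : (⋃ i, C i)ᶜ.Finite) {A : Set M} (hA : ∀ i, (A ∩ C i).Finite ∨ (C i \ A).Finite)
    (hAinf : A.Infinite) : ∃ S : Finset ι, S.Nonempty ∧ (A ∆ ⋃ i ∈ S, C i).Finite := by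
  classical
  have := Fintype.ofFinite ι
  set S := Finset.univ.filter fun i => (A ∩ C i).Infinite
  have hS : ∀ i, i ∈ S ↔ (A ∩ C i).Infinite := by simp [S]
  have hpiece : ∀ i, ((A ∩ C i) \ ⋃ j ∈ S, C j).Finite := by
    intro i
    by_cases hi : i ∈ S
    · exact finite_empty.subset fun a ⟨⟨_, ha⟩, haS⟩ => haS (mem_iUnion₂.2 ⟨i, hi, ha⟩)
    · exact (not_infinite.1 ((hS i).not.1 hi)).sdiff
  have hout : (A \ ⋃ i ∈ S, C i).Finite := by
    refine (hcov.union (finite_iUnion hpiece)).subset ?_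
    rintro a ⟨ha, haS⟩
    by_cases hcov' : a ∈ ⋃ i, C i
    · obtain ⟨i, hi⟩ := mem_iUnion.1 hcov'
      exact Or.inr (mem_iUnion.2 ⟨i, ⟨ha, hi⟩, haS⟩)
    · exact Or.inl hcov'
  have hin : ((⋃ i ∈ S, C i) \ A).Finite := by
    simp_rw [iUnion_sdiff]
    exact S.finite_toSet.biUnion fun i hi => ((hA i).resolve_left ((hS i).1 hi))
  refine ⟨S, ?_, hout.union hin⟩
  rw [Finset.nonempty_iff_ne_empty]
  intro hSe
  simp only [hSe, Finset.notMem_empty, iUnion_of_empty, iUnion_empty, sdiff_empty] at hout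
  exact hAinf hout

lemma Fintype.card_nonempty_finset [Fintype ι] [DecidableEq ι] :
    Fintype.card {S : Finset ι // S.Nonempty} = 2 ^ Fintype.card ι - 1 := by
  simp only [Finset.nonempty_iff_ne_empty]
  rw [Fintype.card_subtype_compl, Fintype.card_subtype_eq, Fintype.card_finset]

end AlmostDisjoint

lemma vec_two_eta {M : Type*} (v : Fin 2 → M) : ![v 0, v 1] = v := by
  funext i; fin_cases i <;> rfl

namespace IsDefBijectionGraph

variable {M : Type u} {G : Set (Fin 2 → M)} {A B : Set M}

lemma injOn_fst (h : IsDefBijectionGraph G A B) : InjOn (fun v => v 0) G := by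
  intro v hv w hw hvw
  have h1 : v 1 = w 1 := (h.2.1 (v 0) (h.1 v hv).1).unique (by rwa [vec_two_eta])
    (by rw [show v 0 = w 0 from hvw, vec_two_eta]; exact hw)
  rw [← vec_two_eta v, ← vec_two_eta w, show v 0 = w 0 from hvw, h1]

lemma injOn_snd (h : IsDefBijectionGraph G A B) : InjOn (fun v => v 1) G := by
  intro v hv w hw hvw
  have h0 : v 0 = w 0 := (h.2.2 (v 1) (h.1 v hv).2).unique (by rwa [vec_two_eta])
    (by rw [show v 1 = w 1 from hvw, vec_two_eta]; exact hw)
  rw [← vec_two_eta v, ← vec_two_eta w, show v 1 = w 1 from hvw, h0]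

lemma image_fst (h : IsDefBijectionGraph G A B) : (fun v => v 0) '' G = A := by
  refine Subset.antisymm (image_subset_iff.2 fun v hv => (h.1 v hv).1) fun x hx => ?_
  obtain ⟨y, hy, -⟩ := h.2.1 x hx
  exact ⟨_, hy, rfl⟩

lemma image_snd (h : IsDefBijectionGraph G A B) : (fun v => v 1) '' G = B := by
  refine Subset.antisymm (image_subset_iff.2 fun v hv => (h.1 v hv).2) fun y hy => ?_
  obtain ⟨x, hx, -⟩ := h.2.2 y hy
  exact ⟨_, hx, rfl⟩

lemma infinite_iff (h : IsDefBijectionGraph G A B) : A.Infinite ↔ B.Infinite := by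
  rw [← h.image_fst, ← h.image_snd, infinite_image_iff h.injOn_fst,
    infinite_image_iff h.injOn_snd]

lemma restrict (h : IsDefBijectionGraph G A B) {A' : Set M} (hA' : A' ⊆ A) :
    IsDefBijectionGraph (G ∩ {v | v 0 ∈ A'}) A' ((fun v => v 1) '' (G ∩ {v | v 0 ∈ A'})) := by
  refine ⟨fun v hv => ⟨hv.2, v, hv, rfl⟩, fun x hx => ?_, ?_⟩
  · obtain ⟨y, hy, huniq⟩ := h.2.1 x (hA' hx)
    exact ⟨y, ⟨hy, hx⟩, fun y' hy' => huniq y' hy'.1⟩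
  · rintro _ ⟨v, hv, rfl⟩
    refine ⟨v 0, show ![v 0, v 1] ∈ _ by rwa [vec_two_eta], fun x hx => ?_⟩
    exact (h.2.2 (v 1) (h.1 v hv.1).2).unique hx.1 (by rw [vec_two_eta]; exact hv.1)

end IsDefBijectionGraph

section SelfSufficient

variable {L : FirstOrder.Language.{v, w}} {M : Type u} [L.Structure M]

lemma asSet1_biUnion {ι : Type*} (X : ι → Set (Fin 1 → M)) (S : Finset ι) :
    asSet1 (⋃ i ∈ S, X i) = ⋃ i ∈ S, asSet1 (X i) := by
  ext a; simp [asSet1]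

lemma SelfSufficient.not_isDefBijectionGraph {C J₁ J₂ : DefSet L M 1}
    (hC : SelfSufficient L M (asSet1 C.1)) (hJ₁ : (asSet1 J₁.1 ∩ asSet1 C.1).Infinite)
    (hJ₂ : asSet1 J₂.1 ⊆ (asSet1 C.1)ᶜ) (G : DefSet L M 2) :
    ¬ IsDefBijectionGraph G.1 (asSet1 J₁.1) (asSet1 J₂.1) := by
  intro hG
  let K : DefSet L M 1 := ⟨J₁.1 ∩ C.1, J₁.2.inter C.2⟩
  let G' : DefSet L M 2 := ⟨G.1 ∩ (fun v => v ∘ fun _ : Fin 1 => 0) ⁻¹' K.1,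
    G.2.inter (K.2.preimage_comp _)⟩
  let K' : DefSet L M 1 := ⟨(fun v => v ∘ fun _ : Fin 1 => 1) '' G'.1, G'.2.image_comp _⟩
  have hK' : asSet1 K'.1 = (fun v => v 1) '' G'.1 := by
    ext b
    exact ⟨fun ⟨v, hv, hvb⟩ => ⟨v, hv, congrFun hvb 0⟩,
      fun ⟨v, hv, hvb⟩ => ⟨v, hv, funext fun _ => hvb⟩⟩
  have hG' : IsDefBijectionGraph G'.1 (asSet1 K.1) (asSet1 K'.1) :=
    hK' ▸ hG.restrict (A' := asSet1 K.1) inter_subset_left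
  refine hC.2 K K' inter_subset_right ?_ hJ₁ (hG'.infinite_iff.1 hJ₁) ⟨G', hG'⟩
  rw [hK']
  rintro _ ⟨v, hv, rfl⟩
  exact hJ₂ (hG.1 v hv.1).2

lemma selfSufficient_biUnion {ι : Type*} {S : Finset ι} (hS : S.Nonempty)
    {C : ι → DefSet L M 1} (hC : ∀ i ∈ S, SelfSufficient L M (asSet1 (C i).1)) :
    SelfSufficient L M (⋃ i ∈ S, asSet1 (C i).1) := by
  obtain ⟨i₀, hi₀⟩ := hS
  refine ⟨(hC i₀ hi₀).1.mono (subset_biUnion_of_mem (u := fun i => asSet1 (C i).1) hi₀), ?_⟩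
  rintro J₁ J₂ hJ₁ hJ₂ hJ₁inf - ⟨G, hG⟩
  obtain ⟨i, hi, hinf⟩ : ∃ i ∈ S, (asSet1 J₁.1 ∩ asSet1 (C i).1).Infinite := by
    by_contra! h
    refine hJ₁inf ((S.finite_toSet.biUnion h).subset ?_)
    rw [← inter_iUnion₂]
    exact subset_inter subset_rfl hJ₁
  refine (hC i hi).not_isDefBijectionGraph hinf (hJ₂.trans (compl_subset_compl.2 ?_)) G hG
  exact subset_biUnion_of_mem (u := fun i => asSet1 (C i).1) hi

lemma MinimallySelfSufficient.finite_inter_or_finite_sdiff {C : Set M}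
    (hC : MinimallySelfSufficient L M C) {X : DefSet L M 1}
    (hX : SelfSufficient L M (asSet1 X.1)) :
    (asSet1 X.1 ∩ C).Finite ∨ (C \ asSet1 X.1).Finite := by
  refine (hC.2 X hX).imp (fun h => inter_comm C _ ▸ h) ?_
  rintro ⟨F, hF, hCF⟩
  exact hF.subset fun a ⟨haC, haX⟩ => (hCF haC).resolve_left haX

end SelfSufficient

theorem statement_19_general (L : FirstOrder.Language.{v, w}) (M : Type u) [L.Structure M]
    (m : ℕ) (C : Fin m → DefSet L M 1)
    (hmin : ∀ i, MinimallySelfSufficient L M (asSet1 (C i).1))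
    (hij : ∀ i j, i ≠ j → (asSet1 (C i).1 ∩ asSet1 (C j).1).Finite)
    (hcov : ((⋃ i, asSet1 (C i).1)ᶜ : Set M).Finite) :
    ∃ R : Fin (2 ^ m - 1) → DefSet L M 1,
      (∀ j, SelfSufficient L M (asSet1 (R j).1)) ∧
      (∀ j k, j ≠ k → ¬ FinSymmDiff (asSet1 (R j).1) (asSet1 (R k).1)) ∧
      (∀ I : DefSet L M 1, SelfSufficient L M (asSet1 I.1) →
        ∃ j, FinSymmDiff (asSet1 I.1) (asSet1 (R j).1)) := by
  let e : Fin (2 ^ m - 1) ≃ {S : Finset (Fin m) // S.Nonempty} :=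
    (Fintype.equivFinOfCardEq (by rw [Fintype.card_nonempty_finset, Fintype.card_fin])).symm
  let R : Finset (Fin m) → DefSet L M 1 :=
    fun S => ⟨⋃ i ∈ S, (C i).1, definable_biUnion_finset (fun i => (C i).2) S⟩
  have hR : ∀ S, asSet1 (R S).1 = ⋃ i ∈ S, asSet1 (C i).1 := fun S => asSet1_biUnion _ S
  refine ⟨fun j => R (e j), fun j => ?_, fun j k hjk => ?_, fun I hI => ?_⟩
  · rw [hR]
    exact selfSufficient_biUnion (e j).2 fun i _ => (hmin i).1
  · rw [hR, hR]
    exact not_finite_symmDiff_biUnion (fun i => (hmin i).1.1) hij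
      fun h => hjk (e.injective (Subtype.ext h))
  · obtain ⟨S, hS, hfin⟩ := exists_nonempty_finite_symmDiff_biUnion hcov
      (fun i => (hmin i).finite_inter_or_finite_sdiff hI) hI.1
    refine ⟨e.symm ⟨S, hS⟩, ?_⟩
    rw [hR, e.apply_symm_apply]
    exact hfin

/-- If an o-minimal structure has a generating system `C_1, …, C_m` of
minimally self-sufficient sets, then `|𝔇(M)| = 2 ^ m - 1`: there are `2 ^ m - 1` pairwise
`∼_fin`-inequivalent self-sufficient definable sets such that every self-sufficient definable
set is `∼_fin`-equivalent to one of them. -/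
theorem statement_19 (L : FirstOrder.Language.{v, w}) (M : Type u) [L.Structure M]
    [LinearOrder M] [DenselyOrdered M] [NoMinOrder M] [NoMaxOrder M]
    (hlt : LtDefinable L M) (hom : OMinimal L M)
    (m : ℕ) (C : Fin m → DefSet L M 1)
    (hmin : ∀ i, MinimallySelfSufficient L M (asSet1 (C i).1))
    (hij : ∀ i j, i ≠ j → (asSet1 (C i).1 ∩ asSet1 (C j).1).Finite)
    (hcov : ((⋃ i, asSet1 (C i).1)ᶜ : Set M).Finite) :
    ∃ R : Fin (2 ^ m - 1) → DefSet L M 1,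
      (∀ j, SelfSufficient L M (asSet1 (R j).1)) ∧
      (∀ j k, j ≠ k → ¬ FinSymmDiff (asSet1 (R j).1) (asSet1 (R k).1)) ∧
      (∀ I : DefSet L M 1, SelfSufficient L M (asSet1 I.1) →
        ∃ j, FinSymmDiff (asSet1 I.1) (asSet1 (R j).1)) :=
  statement_19_general L M m C hmin hij hcov

end PaperDim
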